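/- For all integers k, ℓ ≥ 3: if there exists a (k,ℓ)-crucial permutation of length n, then there exists a (k,ℓ)-bicrucial permutation of length 2n. -/

import Mathlib

/-!
Interleave π with its reverse-complement: `σ (2j-1) = n + π j` and `σ (2j) = n + 1 - π (n + 1 - j)`,
so the odd positions carry a copy of π on the upper half of the values and the even positions
carry the reverse-complement of π on the lower half. An arithmetic progression of odd difference
alternates between the two halves, so none of its three-term windows is monotone; one of even
difference stays in a single parity class, where it is a monotone progression of π (the
reverse-complement preserves both patterns). Hence σ is anti-monotone. In an extension of σ on
the right (resp. left), the odd positions form a copy of an extension of π on the right (resp. the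
reverse-complement of one), which contains a forbidden progression since π is crucial; doubling
its difference gives one in the extension of σ.
-/

/-- `π` (viewed as a 1-indexed function `ℕ → ℕ`) is a permutation of length `n`,
i.e. the values `π 1, π 2, …, π n` contain each of `1,…,n` exactly once. -/
def IsPermutation (n : ℕ) (π : ℕ → ℕ) : Prop :=
  (∀ i, 1 ≤ i → i ≤ n → 1 ≤ π i ∧ π i ≤ n) ∧
  (∀ i j, 1 ≤ i → i ≤ n → 1 ≤ j → j ≤ n → π i = π j → i = j) ∧
  (∀ v, 1 ≤ v → v ≤ n → ∃ i, 1 ≤ i ∧ i ≤ n ∧ π i = v)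

/-- `π` (of length `n`) has a strictly increasing arithmetic subsequence of length `k`,
i.e. an arithmetic occurrence of the pattern `1 2 … k`. -/
def HasArithInc (n k : ℕ) (π : ℕ → ℕ) : Prop :=
  ∃ i d : ℕ, 1 ≤ i ∧ 1 ≤ d ∧ i + (k - 1) * d ≤ n ∧
    ∀ j, j + 1 < k → π (i + j * d) < π (i + (j + 1) * d)

/-- `π` (of length `n`) has a strictly decreasing arithmetic subsequence of length `k`,
i.e. an arithmetic occurrence of the pattern `k (k-1) … 1`. -/
def HasArithDec (n k : ℕ) (π : ℕ → ℕ) : Prop :=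
  ∃ i d : ℕ, 1 ≤ i ∧ 1 ≤ d ∧ i + (k - 1) * d ≤ n ∧
    ∀ j, j + 1 < k → π (i + j * d) > π (i + (j + 1) * d)

/-- `π` (of length `n`) is `(k,l)`-anti-monotone: it avoids arithmetically
the patterns `1 2 … k` and `l (l-1) … 1`. -/
def AntiMonotone (n k l : ℕ) (π : ℕ → ℕ) : Prop :=
  ¬ HasArithInc n k π ∧ ¬ HasArithDec n l π

/-- The extension of `π` (of length `n`) to the right by `x`: every entry `≥ x` is
increased by `1` and `x` is appended at the right end (position `n+1`). -/
def ExtendRight (n : ℕ) (π : ℕ → ℕ) (x : ℕ) : ℕ → ℕ :=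
  fun i => if i = n + 1 then x else if x ≤ π i then π i + 1 else π i

/-- The extension of `π` to the left by `x`: every entry `≥ x` is increased by `1`
and `x` is prepended at the left end (position `1`). -/
def ExtendLeft (π : ℕ → ℕ) (x : ℕ) : ℕ → ℕ :=
  fun i => if i = 1 then x else if x ≤ π (i - 1) then π (i - 1) + 1 else π (i - 1)

/-- `π` is a `(k,l)`-crucial permutation of length `n`. -/
def Crucial (n k l : ℕ) (π : ℕ → ℕ) : Prop :=
  IsPermutation n π ∧ AntiMonotone n k l π ∧
  ∀ x, 1 ≤ x → x ≤ n + 1 → ¬ AntiMonotone (n + 1) k l (ExtendRight n π x)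

/-- `π` is a `(k,l)`-bicrucial permutation of length `n`. -/
def Bicrucial (n k l : ℕ) (π : ℕ → ℕ) : Prop :=
  Crucial n k l π ∧
  ∀ x, 1 ≤ x → x ≤ n + 1 → ¬ AntiMonotone (n + 1) k l (ExtendLeft π x)

-- `HasArithInc` and `HasArithDec` are `HasArithChain` for `r = (· < ·)` and `r = (· > ·)`, by `rfl`.
def HasArithChain (n k : ℕ) (r : ℕ → ℕ → Prop) (f : ℕ → ℕ) : Prop :=
  ∃ i d : ℕ, 1 ≤ i ∧ 1 ≤ d ∧ i + (k - 1) * d ≤ n ∧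
    ∀ j, j + 1 < k → r (f (i + j * d)) (f (i + (j + 1) * d))

def SameOrder (m : ℕ) (f g : ℕ → ℕ) : Prop :=
  ∀ p q, 1 ≤ p → p ≤ m → 1 ≤ q → q ≤ m → (f p < f q ↔ g p < g q)

def OppositeOrder (m : ℕ) (f g : ℕ → ℕ) : Prop :=
  ∀ p q, 1 ≤ p → p ≤ m → 1 ≤ q → q ≤ m → (f p < f q ↔ g q < g p)

namespace HasArithChain

variable {m k : ℕ} {r r' : ℕ → ℕ → Prop} {f g : ℕ → ℕ}

theorem of_forall (h : ∀ p q, 1 ≤ p → p ≤ m → 1 ≤ q → q ≤ m → r (f p) (f q) → r' (g p) (g q))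
    (hf : HasArithChain m k r f) : HasArithChain m k r' g := by
  obtain ⟨i, d, hi, hd, hlast, hchain⟩ := hf
  have hpos : ∀ j, j ≤ k - 1 → i + j * d ≤ m := fun j hj =>
    le_trans (by gcongr) hlast
  exact ⟨i, d, hi, hd, hlast, fun j hj => h _ _ (by omega) (hpos j (by omega)) (by omega)
    (hpos (j + 1) (by omega)) (hchain j hj)⟩

theorem of_rev (hf : HasArithChain m k r (fun p => f (m + 1 - p))) :
    HasArithChain m k (flip r) f := by
  obtain ⟨i, d, hi, hd, hlast, hchain⟩ := hf
  refine ⟨m + 1 - (i + (k - 1) * d), d, by omega, hd, by omega, fun j hj => ?_⟩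
  obtain ⟨j', rfl⟩ : ∃ j', k = j' + j + 2 := ⟨k - j - 2, by omega⟩
  have hsplit : (j' + j + 2 - 1) * d = j' * d + d + j * d := by
    rw [show j' + j + 2 - 1 = j' + j + 1 by omega]; ring
  have hsucc : (j + 1) * d = j * d + d := by ring
  have hsucc' : (j' + 1) * d = j' * d + d := by ring
  have := hchain j' (by omega)
  rwa [show m + 1 - (i + (j' + j + 2 - 1) * d) + (j + 1) * d = m + 1 - (i + j' * d) by omega,
    show m + 1 - (i + (j' + j + 2 - 1) * d) + j * d = m + 1 - (i + (j' + 1) * d) by omega]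

theorem of_comp_two_mul_sub_one {N : ℕ} (hN : 2 * m ≤ N + 1)
    (hf : HasArithChain m k r (fun p => f (2 * p - 1))) : HasArithChain N k r f := by
  obtain ⟨i, d, hi, hd, hlast, hchain⟩ := hf
  refine ⟨2 * i - 1, 2 * d, by omega, by omega, ?_, fun j hj => ?_⟩
  · have : (k - 1) * (2 * d) = 2 * ((k - 1) * d) := by ring
    omega
  · have h1 : j * (2 * d) = 2 * (j * d) := by ring
    have h2 : (j + 1) * (2 * d) = 2 * ((j + 1) * d) := by ring
    have := hchain j hj
    rwa [show 2 * i - 1 + j * (2 * d) = 2 * (i + j * d) - 1 by omega,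
      show 2 * i - 1 + (j + 1) * (2 * d) = 2 * (i + (j + 1) * d) - 1 by omega]

theorem odd_or_even {n : ℕ} (hk : 3 ≤ k)
    (hcross : ∀ i d, d % 2 = 1 → 1 ≤ i → i + 2 * d ≤ 2 * n →
      r (f i) (f (i + d)) → ¬ r (f (i + d)) (f (i + 2 * d)))
    (hf : HasArithChain (2 * n) k r f) :
    HasArithChain n k r (fun p => f (2 * p - 1)) ∨ HasArithChain n k r (fun p => f (2 * p)) := by
  obtain ⟨i, d, hi, hd, hlast, hchain⟩ := hf
  obtain ⟨e, rfl | rfl⟩ := Nat.even_or_odd' d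
  · have hlast' : (k - 1) * (2 * e) = 2 * ((k - 1) * e) := by ring
    have hstep : ∀ j, j * (2 * e) = 2 * (j * e) := fun j => by ring
    obtain ⟨a, rfl | rfl⟩ := Nat.even_or_odd' i
    · refine Or.inr ⟨a, e, by omega, by omega, by omega, fun j hj => ?_⟩
      have := hchain j hj
      rwa [hstep, hstep, ← Nat.mul_add, ← Nat.mul_add] at this
    · refine Or.inl ⟨a + 1, e, by omega, by omega, by omega, fun j hj => ?_⟩
      have := hchain j hj
      rwa [hstep, hstep, show 2 * a + 1 + 2 * (j * e) = 2 * (a + 1 + j * e) - 1 by omega,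
        show 2 * a + 1 + 2 * ((j + 1) * e) = 2 * (a + 1 + (j + 1) * e) - 1 by omega] at this
  · have h2d : 2 * (2 * e + 1) ≤ (k - 1) * (2 * e + 1) := Nat.mul_le_mul_right _ (by omega)
    have h0 := hchain 0 (by omega)
    have h1 := hchain 1 (by omega)
    simp only [zero_mul, add_zero, zero_add, one_mul] at h0 h1
    exact absurd h1 (hcross i _ (by omega) hi (by omega) h0)

end HasArithChain

section AntiMonotone

variable {m k l : ℕ} {f g : ℕ → ℕ}

theorem SameOrder.symm (h : SameOrder m f g) : SameOrder m g f :=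
  fun p q hp hp' hq hq' => (h p q hp hp' hq hq').symm

theorem SameOrder.antiMonotone (h : SameOrder m f g) (hg : AntiMonotone m k l g) :
    AntiMonotone m k l f :=
  ⟨fun hf => hg.1 (HasArithChain.of_forall (fun p q hp hp' hq hq' => (h p q hp hp' hq hq').1) hf),
    fun hf => hg.2 (HasArithChain.of_forall (fun p q hp hp' hq hq' => (h q p hq hq' hp hp').1) hf)⟩

theorem OppositeOrder.antiMonotone_of_rev (h : OppositeOrder m f (fun p => g (m + 1 - p)))
    (hg : AntiMonotone m k l g) : AntiMonotone m k l f :=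
  ⟨fun hf => hg.1 (HasArithChain.of_rev (r := (· > ·))
      (HasArithChain.of_forall (fun p q hp hp' hq hq' => (h p q hp hp' hq hq').1) hf)),
    fun hf => hg.2 (HasArithChain.of_rev (r := (· < ·))
      (HasArithChain.of_forall (fun p q hp hp' hq hq' => (h q p hq hq' hp hp').1) hf))⟩

theorem AntiMonotone.comp_two_mul_sub_one {N : ℕ} (hN : 2 * m ≤ N + 1)
    (hf : AntiMonotone N k l f) : AntiMonotone m k l (fun p => f (2 * p - 1)) :=
  ⟨fun h => hf.1 (HasArithChain.of_comp_two_mul_sub_one hN h),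
    fun h => hf.2 (HasArithChain.of_comp_two_mul_sub_one hN h)⟩

end AntiMonotone

theorem IsPermutation.mapsTo {n : ℕ} {π : ℕ → ℕ} (hπ : IsPermutation n π) :
    Set.MapsTo π (Set.Icc 1 n) (Set.Icc 1 n) :=
  fun i hi => hπ.1 i hi.1 hi.2

section Extend

variable {n : ℕ} {f g : ℕ → ℕ} {x y : ℕ}

theorem extendRight_last : ExtendRight n f x (n + 1) = x := if_pos rfl

theorem extendRight_lt_extendRight_iff {p q : ℕ} (hp : p ≤ n) (hq : q ≤ n) :
    ExtendRight n f x p < ExtendRight n f x q ↔ f p < f q := by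
  simp only [ExtendRight, if_neg (show p ≠ n + 1 by omega), if_neg (show q ≠ n + 1 by omega)]
  split_ifs <;> omega

theorem extendRight_lt_last_iff {p : ℕ} (hp : p ≤ n) : ExtendRight n f x p < x ↔ f p < x := by
  simp only [ExtendRight, if_neg (show p ≠ n + 1 by omega)]
  split_ifs <;> omega

theorem last_lt_extendRight_iff {p : ℕ} (hp : p ≤ n) : x < ExtendRight n f x p ↔ x ≤ f p := by
  simp only [ExtendRight, if_neg (show p ≠ n + 1 by omega)]
  split_ifs <;> omega

theorem extendRight_comp_two_mul_sub_one :
    (fun p => ExtendRight (2 * n) f x (2 * p - 1)) = ExtendRight n (fun p => f (2 * p - 1)) x := by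
  funext p
  simp only [ExtendRight]
  split_ifs <;> first | rfl | omega

theorem extendLeft_comp_two_mul_sub_one :
    (fun p => ExtendLeft f x (2 * p - 1)) = ExtendLeft (fun p => f (2 * p)) x := by
  funext p
  simp only [ExtendLeft, show 2 * p - 1 - 1 = 2 * (p - 1) by omega]
  split_ifs <;> first | rfl | omega

theorem extendLeft_rev_eq_extendRight :
    (fun p => ExtendLeft f x (n + 1 + 1 - p)) = ExtendRight n (fun p => f (n + 1 - p)) x := by
  funext p
  simp only [ExtendLeft, ExtendRight, show n + 1 + 1 - p - 1 = n + 1 - p by omega]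
  split_ifs <;> first | rfl | omega

theorem SameOrder.extendRight (h : SameOrder n f g)
    (hxy : ∀ p, 1 ≤ p → p ≤ n → (x ≤ f p ↔ y ≤ g p)) :
    SameOrder (n + 1) (ExtendRight n f x) (ExtendRight n g y) := by
  intro p q hp hp' hq hq'
  rcases (show p ≤ n ∨ p = n + 1 by omega) with hpn | rfl <;>
    rcases (show q ≤ n ∨ q = n + 1 by omega) with hqn | rfl
  · simpa only [extendRight_lt_extendRight_iff hpn hqn] using h p q hp hpn hq hqn
  · simp only [extendRight_last, extendRight_lt_last_iff hpn, ← not_le, hxy p hp hpn]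
  · simp only [extendRight_last, last_lt_extendRight_iff hqn, hxy q hq hqn]
  · simp only [extendRight_last, lt_irrefl]

theorem OppositeOrder.extendRight (h : OppositeOrder n f g)
    (hxy : ∀ p, 1 ≤ p → p ≤ n → (x ≤ f p ↔ g p < y)) :
    OppositeOrder (n + 1) (ExtendRight n f x) (ExtendRight n g y) := by
  intro p q hp hp' hq hq'
  rcases (show p ≤ n ∨ p = n + 1 by omega) with hpn | rfl <;>
    rcases (show q ≤ n ∨ q = n + 1 by omega) with hqn | rfl
  · simpa only [extendRight_lt_extendRight_iff hpn hqn, extendRight_lt_extendRight_iff hqn hpn]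
      using h p q hp hpn hq hqn
  · simp only [extendRight_last, extendRight_lt_last_iff hpn, last_lt_extendRight_iff hpn,
      ← not_le, hxy p hp hpn, not_not]
  · simp only [extendRight_last, last_lt_extendRight_iff hqn, extendRight_lt_last_iff hqn,
      hxy q hq hqn]
  · simp only [extendRight_last, lt_irrefl]

end Extend

def doubleInterleave (n : ℕ) (π : ℕ → ℕ) : ℕ → ℕ :=
  fun i => if i % 2 = 1 then n + π ((i + 1) / 2) else n + 1 - π (n + 1 - i / 2)

section doubleInterleave

variable {n : ℕ} {π : ℕ → ℕ}

theorem doubleInterleave_two_mul_sub_one {j : ℕ} (hj : 1 ≤ j) :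
    doubleInterleave n π (2 * j - 1) = n + π j := by
  simp only [doubleInterleave, if_pos (show (2 * j - 1) % 2 = 1 by omega),
    show (2 * j - 1 + 1) / 2 = j by omega]

theorem doubleInterleave_two_mul (j : ℕ) :
    doubleInterleave n π (2 * j) = n + 1 - π (n + 1 - j) := by
  simp only [doubleInterleave, if_neg (show ¬(2 * j) % 2 = 1 by omega),
    show 2 * j / 2 = j by omega]

theorem doubleInterleave_even_lt_odd (hπ : Set.MapsTo π (Set.Icc 1 n) (Set.Icc 1 n))
    {a b : ℕ} (ha : a % 2 = 1) (ha' : a ≤ 2 * n) (hb : b % 2 = 0) (hb1 : 1 ≤ b) (hb2 : b ≤ 2 * n) :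
    doubleInterleave n π b < doubleInterleave n π a := by
  have := (hπ (show (a + 1) / 2 ∈ Set.Icc 1 n by simp only [Set.mem_Icc]; omega)).1
  have := (hπ (show n + 1 - b / 2 ∈ Set.Icc 1 n by simp only [Set.mem_Icc]; omega)).1
  simp only [doubleInterleave, if_pos ha, if_neg (show ¬b % 2 = 1 by omega)]
  omega

theorem isPermutation_doubleInterleave (hπ : IsPermutation n π) :
    IsPermutation (2 * n) (doubleInterleave n π) := by
  have hlt := fun a b => doubleInterleave_even_lt_odd (a := a) (b := b) hπ.mapsTo
  obtain ⟨hbnd, hinj, hsurj⟩ := hπ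
  refine ⟨fun i hi hi' => ?_, fun i j hi hi' hj hj' hij => ?_, fun v hv hv' => ?_⟩
  · simp only [doubleInterleave]
    split_ifs
    · have := hbnd ((i + 1) / 2) (by omega) (by omega); omega
    · have := hbnd (n + 1 - i / 2) (by omega) (by omega); omega
  · rcases Nat.mod_two_eq_zero_or_one i with hi2 | hi2 <;>
      rcases Nat.mod_two_eq_zero_or_one j with hj2 | hj2
    · obtain ⟨a, rfl⟩ : ∃ a, i = 2 * a := ⟨i / 2, by omega⟩
      obtain ⟨b, rfl⟩ : ∃ b, j = 2 * b := ⟨j / 2, by omega⟩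
      rw [doubleInterleave_two_mul, doubleInterleave_two_mul] at hij
      have := hbnd (n + 1 - a) (by omega) (by omega)
      have := hbnd (n + 1 - b) (by omega) (by omega)
      have := hinj _ _ (by omega) (by omega) (by omega) (by omega)
        (show π (n + 1 - a) = π (n + 1 - b) by omega)
      omega
    · exact absurd hij (hlt j i hj2 hj' hi2 hi hi').ne
    · exact absurd hij (hlt i j hi2 hi' hj2 hj hj').ne'
    · obtain ⟨a, rfl⟩ : ∃ a, i = 2 * a - 1 := ⟨(i + 1) / 2, by omega⟩
      obtain ⟨b, rfl⟩ : ∃ b, j = 2 * b - 1 := ⟨(j + 1) / 2, by omega⟩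
      rw [doubleInterleave_two_mul_sub_one (by omega),
        doubleInterleave_two_mul_sub_one (by omega)] at hij
      have := hinj _ _ (by omega) (by omega) (by omega) (by omega) (Nat.add_left_cancel hij)
      omega
  · by_cases hvn : n < v
    · obtain ⟨i, hi, hi', hiv⟩ := hsurj (v - n) (by omega) (by omega)
      exact ⟨2 * i - 1, by omega, by omega, by rw [doubleInterleave_two_mul_sub_one hi]; omega⟩
    · obtain ⟨i, hi, hi', hiv⟩ := hsurj (n + 1 - v) (by omega) (by omega)
      refine ⟨2 * (n + 1 - i), by omega, by omega, ?_⟩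
      rw [doubleInterleave_two_mul, show n + 1 - (n + 1 - i) = i by omega]
      omega

theorem sameOrder_doubleInterleave_odd :
    SameOrder n π (fun p => doubleInterleave n π (2 * p - 1)) :=
  fun p q hp _ hq _ => by
    simp only [doubleInterleave_two_mul_sub_one hp, doubleInterleave_two_mul_sub_one hq]
    omega

theorem oppositeOrder_doubleInterleave_even (hπ : Set.MapsTo π (Set.Icc 1 n) (Set.Icc 1 n)) :
    OppositeOrder n (fun p => doubleInterleave n π (2 * p)) (fun p => π (n + 1 - p)) :=
  fun p q hp hp' hq hq' => by
    obtain ⟨-, hp_le⟩ := hπ (show n + 1 - p ∈ Set.Icc 1 n by simp only [Set.mem_Icc]; omega)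
    obtain ⟨-, hq_le⟩ := hπ (show n + 1 - q ∈ Set.Icc 1 n by simp only [Set.mem_Icc]; omega)
    simp only [doubleInterleave_two_mul]
    omega

theorem oppositeOrder_doubleInterleave_even_rev
    (hπ : Set.MapsTo π (Set.Icc 1 n) (Set.Icc 1 n)) :
    OppositeOrder n π (fun p => doubleInterleave n π (2 * (n + 1 - p))) :=
  fun p q hp hp' hq hq' => by
    obtain ⟨-, hp_le⟩ := hπ ⟨hp, hp'⟩
    obtain ⟨-, hq_le⟩ := hπ ⟨hq, hq'⟩
    simp only [doubleInterleave_two_mul, show n + 1 - (n + 1 - p) = p by omega,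
      show n + 1 - (n + 1 - q) = q by omega]
    omega

theorem antiMonotone_doubleInterleave {k l : ℕ} (hk : 3 ≤ k) (hl : 3 ≤ l)
    (hπ : Set.MapsTo π (Set.Icc 1 n) (Set.Icc 1 n)) (hanti : AntiMonotone n k l π) :
    AntiMonotone (2 * n) k l (doubleInterleave n π) := by
  have hlt := fun a b => doubleInterleave_even_lt_odd (a := a) (b := b) hπ
  have hodd := sameOrder_doubleInterleave_odd.symm.antiMonotone hanti
  have heven := (oppositeOrder_doubleInterleave_even hπ).antiMonotone_of_rev hanti
  constructor
  · intro h
    refine (HasArithChain.odd_or_even hk (fun i d hd hi hid h0 h1 => ?_) h).elim hodd.1 heven.1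
    rcases Nat.mod_two_eq_zero_or_one i with hi2 | hi2
    · exact (hlt _ _ (by omega) (by omega) (by omega) (by omega) (by omega)).not_gt h1
    · exact (hlt _ _ hi2 (by omega) (by omega) (by omega) (by omega)).not_gt h0
  · intro h
    refine (HasArithChain.odd_or_even hl (fun i d hd hi hid h0 h1 => ?_) h).elim hodd.2 heven.2
    rcases Nat.mod_two_eq_zero_or_one i with hi2 | hi2
    · exact (hlt _ _ (by omega) (by omega) hi2 hi (by omega)).not_gt h0
    · exact (hlt _ _ (by omega) (by omega) (by omega) (by omega) (by omega)).not_gt h1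

theorem sameOrder_extendRight_doubleInterleave (hπ : Set.MapsTo π (Set.Icc 1 n) (Set.Icc 1 n))
    (x : ℕ) : SameOrder (n + 1) (ExtendRight n π (max (x - n) 1))
      (ExtendRight n (fun p => doubleInterleave n π (2 * p - 1)) x) :=
  sameOrder_doubleInterleave_odd.extendRight fun p hp hp' => by
    obtain ⟨hp_pos, -⟩ := hπ ⟨hp, hp'⟩
    rw [doubleInterleave_two_mul_sub_one hp]
    omega

theorem oppositeOrder_extendLeft_doubleInterleave
    (hπ : Set.MapsTo π (Set.Icc 1 n) (Set.Icc 1 n)) (x : ℕ) :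
    OppositeOrder (n + 1) (ExtendRight n π (max (n + 2 - x) 1))
      (fun p => ExtendLeft (fun q => doubleInterleave n π (2 * q)) x (n + 1 + 1 - p)) := by
  rw [extendLeft_rev_eq_extendRight]
  refine (oppositeOrder_doubleInterleave_even_rev hπ).extendRight fun p hp hp' => ?_
  obtain ⟨hp_pos, hp_le⟩ := hπ ⟨hp, hp'⟩
  rw [doubleInterleave_two_mul, show n + 1 - (n + 1 - p) = p by omega]
  omega

end doubleInterleave

/-- If a `(k,l)`-crucial permutation of length `n` exists, then a `(k,l)`-bicrucial
permutation of length `2*n` exists. -/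
theorem bicrucial_from_crucial (k l n : ℕ) (hk : 3 ≤ k) (hl : 3 ≤ l)
    (h : ∃ π : ℕ → ℕ, Crucial n k l π) :
    ∃ σ : ℕ → ℕ, Bicrucial (2 * n) k l σ := by
  obtain ⟨π, hperm, hanti, hcrucial⟩ := h
  have hπ := hperm.mapsTo
  refine ⟨doubleInterleave n π, ⟨isPermutation_doubleInterleave hperm,
    antiMonotone_doubleInterleave hk hl hπ hanti, fun x _ _ hx => ?_⟩, fun x _ _ hx => ?_⟩
  · refine hcrucial (max (x - n) 1) (by omega) (by omega)
      ((sameOrder_extendRight_doubleInterleave hπ x).antiMonotone ?_)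
    rw [← extendRight_comp_two_mul_sub_one]
    exact hx.comp_two_mul_sub_one (by omega)
  · refine hcrucial (max (n + 2 - x) 1) (by omega) (by omega)
      ((oppositeOrder_extendLeft_doubleInterleave hπ x).antiMonotone_of_rev ?_)
    rw [← extendLeft_comp_two_mul_sub_one]
    exact hx.comp_two_mul_sub_one (by omega)
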